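/- arXiv:2308.12799 — 6 statements merged into one kernel-verified Lean document; each statement's English description precedes it below -/
import Mathlib

section
/- Let τ and σ be π-compatible topologies on a set X. Then a subset A ⊆ X is nowhere dense in (X, τ) if and only if it is nowhere dense in (X, σ). -/
open Topology Set

/-- Topologies `τ` and `σ` on `X` are π-compatible if each is a π-network for the
other: every nonempty open set of either topology contains a nonempty open set of
the other topology. -/
def PiCompatible {X : Type*} (τ σ : TopologicalSpace X) : Prop :=
  (∀ O : Set X, IsOpen[σ] O → O.Nonempty → ∃ V : Set X, IsOpen[τ] V ∧ V.Nonempty ∧ V ⊆ O) ∧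
  (∀ O : Set X, IsOpen[τ] O → O.Nonempty → ∃ V : Set X, IsOpen[σ] V ∧ V.Nonempty ∧ V ⊆ O)

theorem isNowhereDense_iff_forall_isOpen_exists_disjoint {X : Type*} [TopologicalSpace X]
    {A : Set X} :
    IsNowhereDense A ↔
      ∀ U : Set X, IsOpen U → U.Nonempty → ∃ V ⊆ U, IsOpen V ∧ V.Nonempty ∧ Disjoint V A := by
  rw [IsNowhereDense, interior_eq_empty_iff_dense_compl, dense_iff_inter_open]
  refine forall₃_congr fun U hU _ ↦ ⟨fun ⟨x, hx⟩ ↦ ?_, fun ⟨V, hVU, hV, ⟨x, hx⟩, hVA⟩ ↦ ?_⟩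
  · exact ⟨U ∩ (closure A)ᶜ, inter_subset_left, hU.inter isClosed_closure.isOpen_compl, ⟨x, hx⟩,
      disjoint_compl_left.mono_left inter_subset_right |>.mono_right subset_closure⟩
  · exact ⟨x, hVU hx, disjoint_left.mp (hVA.closure_right hV) hx⟩

theorem PiCompatible.symm {X : Type*} {τ σ : TopologicalSpace X} (h : PiCompatible τ σ) :
    PiCompatible σ τ :=
  ⟨h.2, h.1⟩

theorem PiCompatible.isNowhereDense {X : Type*} {τ σ : TopologicalSpace X}
    (h : PiCompatible τ σ) {A : Set X} (hA : @IsNowhereDense X τ A) :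
    @IsNowhereDense X σ A := by
  rw [@isNowhereDense_iff_forall_isOpen_exists_disjoint X τ] at hA
  rw [@isNowhereDense_iff_forall_isOpen_exists_disjoint X σ]
  intro U hU hUne
  obtain ⟨W, hW, hWne, hWU⟩ := h.1 U hU hUne
  obtain ⟨V, hVW, hV, hVne, hVA⟩ := hA W hW hWne
  obtain ⟨V', hV', hV'ne, hV'V⟩ := h.2 V hV hVne
  exact ⟨V', hV'V.trans (hVW.trans hWU), hV', hV'ne, hVA.mono_left hV'V⟩

theorem stmt_5 {X : Type*} (τ σ : TopologicalSpace X) (h : PiCompatible τ σ) :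
    ∀ A : Set X, @IsNowhereDense X τ A ↔ @IsNowhereDense X σ A :=
  fun _ ↦ ⟨h.isNowhereDense, h.symm.isNowhereDense⟩
end

section
/- Let τ and σ be π-compatible topologies on a set X, and suppose (X, τ) is a Baire space. Then the family of all nonempty subsets of X that are simultaneously a G_δ-set in (X, τ) and a G_δ-set in (X, σ) is a π-network for (X, τ) and also a π-network for (X, σ): every nonempty τ-open set (respectively, every nonempty σ-open set) contains a nonempty set that is G_δ in both topologies. -/
open Topology Set

theorem Set.exists_pairwiseDisjoint_subset_inter_nonempty {α : Type*} (P : Set (Set α)) :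
    ∃ M ⊆ P, M.PairwiseDisjoint id ∧ ∀ S ∈ P, S.Nonempty → ∃ T ∈ M, (S ∩ T).Nonempty := by
  let disjointFamilies := {M : Set (Set α) | M ⊆ P ∧ M.PairwiseDisjoint id}
  obtain ⟨M, hM⟩ := zorn_subset disjointFamilies fun c hc hchain =>
    ⟨⋃₀ c, ⟨sUnion_subset fun M hM => (hc hM).1,
      (pairwiseDisjoint_sUnion hchain.directedOn).2 fun M hM => (hc hM).2⟩,
      fun _ => subset_sUnion_of_mem⟩
  refine ⟨M, hM.prop.1, hM.prop.2, fun S hSP hS => ?_⟩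
  by_contra! hdisj
  have hinsert : insert S M ∈ disjointFamilies :=
    ⟨insert_subset hSP hM.prop.1, hM.prop.2.insert fun T hT _ =>
      disjoint_iff_inter_eq_empty.2 (hdisj T hT)⟩
  have hSM : S ∈ M := hM.2 hinsert (subset_insert S M) (mem_insert S M)
  exact hS.ne_empty (inter_self S ▸ hdisj S hSM)

theorem Set.iInter_eq_iInter_of_interlace {α : Type*} {U V : ℕ → Set α}
    (hUV : ∀ n, U (n + 1) ⊆ V n) (hVU : ∀ n, V n ⊆ U n) : ⋂ n, U n = ⋂ n, V n :=
  (subset_iInter fun n => (iInter_subset U (n + 1)).trans (hUV n)).antisymm (iInter_mono hVU)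

theorem IsOpen.inter_iInter_nonempty_of_subset_closure {X ι : Type*} [TopologicalSpace X]
    [BaireSpace X] [Countable ι] {O : Set X} {U : ι → Set X} (hO : IsOpen O) (hne : O.Nonempty)
    (hU : ∀ i, IsOpen (U i)) (hOU : ∀ i, O ⊆ closure (U i)) : (O ∩ ⋂ i, U i).Nonempty := by
  have hdense : ∀ i, Dense (U i ∪ (closure O)ᶜ) := fun i x => by
    by_cases hx : x ∈ closure O
    · exact closure_mono subset_union_left
        (closure_minimal (hOU i) isClosed_closure hx)
    · exact subset_closure (Or.inr hx)
  obtain ⟨x, hxO, hx⟩ := (dense_iInter_of_isOpen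
    (fun i => (hU i).union isClosed_closure.isOpen_compl) hdense).inter_open_nonempty O hO hne
  exact ⟨x, hxO, mem_iInter.2 fun i =>
    (mem_iInter.1 hx i).resolve_right (not_not.2 (subset_closure hxO))⟩

section

variable {X : Type*} (τ σ : TopologicalSpace X)

def sandwichRefinements (F : Set (Set X)) : Set (Set X) :=
  {U | IsOpen[τ] U ∧ ∃ V, IsOpen[σ] V ∧ U ⊆ V ∧ ∃ W ∈ F, V ⊆ W}

variable {τ σ}

theorem PiCompatible.closure_sUnion_subset (h : PiCompatible τ σ) {F M : Set (Set X)}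
    (hF : ∀ U ∈ F, IsOpen[τ] U)
    (hM : ∀ S ∈ sandwichRefinements τ σ F, S.Nonempty → ∃ T ∈ M, (S ∩ T).Nonempty) :
    closure[τ] (⋃₀ F) ⊆ closure[τ] (⋃₀ M) := by
  let := τ
  refine closure_minimal (sUnion_subset fun U hU y hyU => mem_closure_iff.2 fun W hW hyW => ?_)
    isClosed_closure
  obtain ⟨V, hV, hVne, hVWU⟩ := h.2 (W ∩ U) (hW.inter (hF U hU)) ⟨y, hyW, hyU⟩
  obtain ⟨S, hS, hSne, hSV⟩ := h.1 V hV hVne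
  obtain ⟨T, hT, z, hzS, hzT⟩ :=
    hM S ⟨hS, V, hV, hSV, U, hU, hVWU.trans inter_subset_right⟩ hSne
  exact ⟨z, (hVWU (hSV hzS)).1, T, hT, hzT⟩

theorem exists_isGδ_isGδ_of_forall_mem_sUnion {F : ℕ → Set (Set X)}
    (hF : ∀ n, ∀ U ∈ F n, IsOpen[τ] U) (hdisj : ∀ n, (F n).PairwiseDisjoint id)
    (hrefine : ∀ n, F (n + 1) ⊆ sandwichRefinements τ σ (F n)) {x : X} (hx : ∀ n, x ∈ ⋃₀ F n) :
    ∃ U ∈ F 0, ∃ B ⊆ U, x ∈ B ∧ @IsGδ X τ B ∧ @IsGδ X σ B := by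
  choose U hU hxU using hx
  have hchain : ∀ n, ∃ V, IsOpen[σ] V ∧ U (n + 1) ⊆ V ∧ V ⊆ U n := fun n => by
    obtain ⟨-, V, hV, hUV, W, hW, hVW⟩ := hrefine n (hU (n + 1))
    obtain rfl : W = U n := (hdisj n).elim_set hW (hU n) x (hVW (hUV (hxU (n + 1)))) (hxU n)
    exact ⟨V, hV, hUV, hVW⟩
  choose V hV hUV hVU using hchain
  refine ⟨U 0, hU 0, ⋂ n, U n, iInter_subset U 0, mem_iInter.2 hxU,
    @IsGδ.iInter_of_isOpen X _ τ _ _ fun n => hF n (U n) (hU n), ?_⟩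
  rw [iInter_eq_iInter_of_interlace hUV hVU]
  exact @IsGδ.iInter_of_isOpen X _ σ _ _ hV

theorem PiCompatible.exists_isGδ_isGδ_subset [@BaireSpace X τ] (h : PiCompatible τ σ)
    {O : Set X} (hO : IsOpen[τ] O) (hne : O.Nonempty) :
    ∃ B : Set X, B.Nonempty ∧ @IsGδ X τ B ∧ @IsGδ X σ B ∧ B ⊆ O := by
  choose next hnext_sub hnext_disj hnext_max using
    fun F => exists_pairwiseDisjoint_subset_inter_nonempty (sandwichRefinements τ σ F)
  set F : ℕ → Set (Set X) := fun n => next^[n] {O}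
  have hsucc (n : ℕ) : F (n + 1) = next (F n) := Function.iterate_succ_apply' next n {O}
  have hopen (n : ℕ) : ∀ U ∈ F n, IsOpen[τ] U := by
    cases n with
    | zero => exact fun U hU => (mem_singleton_iff.1 hU).symm ▸ hO
    | succ n => rw [hsucc]; exact fun U hU => (hnext_sub _ hU).1
  have hdense (n : ℕ) : O ⊆ closure[τ] (⋃₀ F n) := by
    induction n with
    | zero => simpa [F] using @subset_closure X τ O
    | succ n ih => exact ih.trans (hsucc n ▸ h.closure_sUnion_subset (hopen n) (hnext_max (F n)))
  let := τ
  obtain ⟨x, -, hx⟩ := hO.inter_iInter_nonempty_of_subset_closure hne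
    (fun n => isOpen_sUnion (hopen n)) hdense
  obtain ⟨U, hUO, B, hBU, hxB, hBτ, hBσ⟩ := exists_isGδ_isGδ_of_forall_mem_sUnion hopen
    (fun n => n.casesOn (pairwiseDisjoint_singleton O id) fun n => hsucc n ▸ hnext_disj _)
    (fun n => hsucc n ▸ hnext_sub _) (mem_iInter.1 hx)
  exact ⟨B, ⟨x, hxB⟩, hBτ, hBσ, mem_singleton_iff.1 hUO ▸ hBU⟩

end

/-- If `τ` and `σ` are π-compatible and `(X, τ)` is a Baire space, then the family of
nonempty sets that are `Gδ` in both topologies is a π-network for both `(X, τ)` and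
`(X, σ)`. -/
theorem stmt_10 {X : Type*} (τ σ : TopologicalSpace X) (h : PiCompatible τ σ)
    (hB : @BaireSpace X τ) :
    (∀ O : Set X, IsOpen[τ] O → O.Nonempty →
      ∃ B : Set X, B.Nonempty ∧ @IsGδ X τ B ∧ @IsGδ X σ B ∧ B ⊆ O) ∧
    (∀ O : Set X, IsOpen[σ] O → O.Nonempty →
      ∃ B : Set X, B.Nonempty ∧ @IsGδ X τ B ∧ @IsGδ X σ B ∧ B ⊆ O) := by
  have hτ := fun O (hO : IsOpen[τ] O) hne => h.exists_isGδ_isGδ_subset hO hne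
  refine ⟨hτ, fun O hO hne => ?_⟩
  obtain ⟨W, hW, hWne, hWO⟩ := h.1 O hO hne
  obtain ⟨B, hBne, hBτ, hBσ, hBW⟩ := hτ W hW hWne
  exact ⟨B, hBne, hBτ, hBσ, hBW.trans hWO⟩
end

section
/- Let {X_α}_{α ∈ A} be a family of sets and, for each α ∈ A, let τ_α and σ_α be π-compatible topologies on X_α. Then the product topology of the topologies τ_α and the product topology of the topologies σ_α are π-compatible topologies on the product set ∏_{α ∈ A} X_α. -/
open Topology Set

/-- The nonempty `τ`-open sets form a π-network for `σ`. -/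
def IsPiNetwork {X : Type*} (τ σ : TopologicalSpace X) : Prop :=
  ∀ O : Set X, IsOpen[σ] O → O.Nonempty → ∃ V : Set X, IsOpen[τ] V ∧ V.Nonempty ∧ V ⊆ O

/-- Inside a basic open box `∏_{i ∈ I} u i` around a point, shrink each of the finitely many
constrained factors to a nonempty `τ i`-open set and leave the other factors unconstrained. -/
theorem IsPiNetwork.pi {ι : Type*} {X : ι → Type*} {τ σ : ∀ i, TopologicalSpace (X i)}
    (h : ∀ i, IsPiNetwork (τ i) (σ i)) :
    IsPiNetwork (@Pi.topologicalSpace ι X τ) (@Pi.topologicalSpace ι X σ) := by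
  intro O hO ⟨x, hx⟩
  obtain ⟨I, u, hu, hIuO⟩ := (@isOpen_pi_iff ι X σ O).mp hO x hx
  have factor : ∀ i, ∃ V : Set (X i), IsOpen[τ i] V ∧ V.Nonempty ∧ (i ∈ I → V ⊆ u i) := by
    intro i
    by_cases hi : i ∈ I
    · obtain ⟨V, hV, hVne, hVu⟩ := h i (u i) (hu i hi).1 ⟨x i, (hu i hi).2⟩
      exact ⟨V, hV, hVne, fun _ => hVu⟩
    · exact ⟨univ, @isOpen_univ _ (τ i), ⟨x i, trivial⟩, fun hi' => absurd hi' hi⟩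
  choose V hV hVne hVu using factor
  refine ⟨(I : Set ι).pi V, @isOpen_set_pi ι X τ _ _ I.finite_toSet fun i _ => hV i, ?_, ?_⟩
  · exact pi_nonempty_iff.mpr fun i => (hVne i).imp fun _ hy _ => hy
  · exact (pi_mono fun i hi => hVu i hi).trans hIuO

/-- Products of π-compatible topologies are π-compatible. -/
theorem stmt_12 {ι : Type*} {X : ι → Type*} (τ σ : ∀ i, TopologicalSpace (X i))
    (h : ∀ i, PiCompatible (τ i) (σ i)) :
    PiCompatible (@Pi.topologicalSpace ι X τ) (@Pi.topologicalSpace ι X σ) :=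
  ⟨IsPiNetwork.pi fun i => (h i).1, IsPiNetwork.pi fun i => (h i).2⟩
end

section
/- Let τ and σ be topologies on a set X such that σ is an admissible extension of τ. Then every nonempty σ-open set O is semi-open in (X, τ): there exists a τ-open set V with V ⊆ O ⊆ Cl_τ(V), where Cl_τ denotes closure in (X, τ). -/
open Topology Set

/-- `AdmissibleExtension σ τ` means: the topology `σ` on `X` is an admissible
extension of the topology `τ` on `X`, i.e. `τ ⊆ σ` and every nonempty `σ`-open set
contains a nonempty `τ`-open set. -/
def AdmissibleExtension {X : Type*} (σ τ : TopologicalSpace X) : Prop :=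
  (∀ s : Set X, IsOpen[τ] s → IsOpen[σ] s) ∧
  (∀ O : Set X, IsOpen[σ] O → O.Nonempty → ∃ V : Set X, IsOpen[τ] V ∧ V.Nonempty ∧ V ⊆ O)

/- The set `O \ Cl_τ (Int_τ O)` is `σ`-open, and any `τ`-open subset of it lies in `Int_τ O` while
avoiding `Cl_τ (Int_τ O)`, so it is empty; admissibility then forces the set itself to be empty.
Hence `V = Int_τ O` witnesses semi-openness. -/

namespace AdmissibleExtension

variable {X : Type*} {σ τ : TopologicalSpace X}

theorem eq_empty_of_interior_eq_empty (h : AdmissibleExtension σ τ) {O : Set X}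
    (hO : IsOpen[σ] O) (hint : @interior X τ O = ∅) : O = ∅ := by
  by_contra hne
  obtain ⟨V, hV, hVne, hVO⟩ := h.2 O hO (nonempty_iff_ne_empty.2 hne)
  exact hVne.ne_empty (subset_empty_iff.1 (hint ▸ @interior_maximal X τ O V hVO hV))

theorem subset_closure_interior (h : AdmissibleExtension σ τ) {O : Set X}
    (hO : IsOpen[σ] O) : O ⊆ closure[τ] (@interior X τ O) := by
  have hopen : IsOpen[σ] (O \ closure[τ] (@interior X τ O)) :=
    @IsOpen.inter X σ _ _ hO (h.1 _ (@isClosed_closure X τ _).isOpen_compl)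
  have hint : @interior X τ (O \ closure[τ] (@interior X τ O)) = ∅ := by
    refine eq_empty_of_forall_notMem fun x hx ↦ ?_
    have hxO : x ∈ @interior X τ O :=
      @interior_mono X τ _ _ sdiff_subset x hx
    exact (@interior_subset X τ _ x hx).2 (@subset_closure X τ _ x hxO)
  exact sdiff_eq_empty.1 (h.eq_empty_of_interior_eq_empty hopen hint)

end AdmissibleExtension

/-- If `σ` is an admissible extension of `τ`, then every nonempty `σ`-open set `O`
is semi-open in `(X, τ)`: there is a `τ`-open `V` with `V ⊆ O ⊆ Cl_τ V`. -/
theorem stmt_14 {X : Type*} (τ σ : TopologicalSpace X) (h : AdmissibleExtension σ τ) :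
    ∀ O : Set X, IsOpen[σ] O → O.Nonempty →
      ∃ V : Set X, IsOpen[τ] V ∧ V ⊆ O ∧ O ⊆ @closure X τ V :=
  fun O hO _ ↦ ⟨@interior X τ O, @isOpen_interior X τ O, @interior_subset X τ O,
    h.subset_closure_interior hO⟩
end

section
/- For subsets A, B ⊆ ℝ, the Hattori topology τ(B) on ℝ is an admissible extension of the Hattori topology τ(A) if and only if B ⊆ A. -/
/-!
In `τ(C)` a point of `C` has the Euclidean neighbourhoods and a point outside `C` the
right neighbourhoods `[x, x + ε)`. So every nonempty `τ(C)`-open set contains an interval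
`(x, x + ε)`, which is open in every Hattori topology; this makes `τ(B)` admissible over
`τ(A)` as soon as it is finer, i.e. as soon as `B ⊆ A`. Conversely, for `x ∈ B \ A` the
`τ(A)`-open set `[x, x + 1)` is not a Euclidean neighbourhood of `x`, so it is not `τ(B)`-open.
-/

open Topology Set

/-- The Hattori topology `τ(A)` on `ℝ`: generated by all open intervals `(a, b)`
together with all half-open intervals `[x, b)` with `x ∉ A` and `x < b`. -/
def hattori (A : Set ℝ) : TopologicalSpace ℝ :=
  TopologicalSpace.generateFrom
    ({S : Set ℝ | ∃ a b : ℝ, S = Set.Ioo a b} ∪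
      {S : Set ℝ | ∃ x b : ℝ, x ∉ A ∧ x < b ∧ S = Set.Ico x b})

open Filter

section Hattori

variable {C : Set ℝ}

lemma isOpen_hattori_Ioo (a b : ℝ) : IsOpen[hattori C] (Ioo a b) :=
  .basic _ (.inl ⟨a, b, rfl⟩)

lemma isOpen_hattori_Ico {x b : ℝ} (hx : x ∉ C) (hxb : x < b) : IsOpen[hattori C] (Ico x b) :=
  .basic _ (.inr ⟨x, b, hx, hxb, rfl⟩)

lemma hattori_mono : Monotone hattori := fun _ _ hBA =>
  TopologicalSpace.generateFrom_anti <| by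
    rintro _ (⟨a, b, rfl⟩ | ⟨x, b, hx, hxb, rfl⟩)
    exacts [.inl ⟨a, b, rfl⟩, .inr ⟨x, b, fun h => hx (hBA h), hxb, rfl⟩]

lemma nhds_hattori_of_mem {x : ℝ} (hx : x ∈ C) : @nhds ℝ (hattori C) x = 𝓝 x := by
  refine le_antisymm ((nhds_basis_Ioo_pos x).ge_iff.2 fun ε hε =>
    @IsOpen.mem_nhds _ (hattori C) _ _ (isOpen_hattori_Ioo _ _) ⟨by linarith, by linarith⟩) ?_
  rw [hattori, TopologicalSpace.nhds_generateFrom]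
  refine le_iInf₂ fun s ⟨hxs, hs⟩ => le_principal_iff.2 ?_
  rcases hs with ⟨a, b, rfl⟩ | ⟨y, b, hy, -, rfl⟩
  · exact Ioo_mem_nhds hxs.1 hxs.2
  · exact Ico_mem_nhds (hxs.1.lt_of_ne (by rintro rfl; exact hy hx)) hxs.2

lemma nhds_hattori_of_notMem {x : ℝ} (hx : x ∉ C) : @nhds ℝ (hattori C) x = 𝓝[≥] x := by
  refine le_antisymm ((nhdsGE_basis_Ico x).ge_iff.2 fun u hxu =>
    @IsOpen.mem_nhds _ (hattori C) _ _ (isOpen_hattori_Ico hx hxu) ⟨le_rfl, hxu⟩) ?_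
  rw [hattori, TopologicalSpace.nhds_generateFrom]
  refine le_iInf₂ fun s ⟨hxs, hs⟩ => le_principal_iff.2 ?_
  rcases hs with ⟨a, b, rfl⟩ | ⟨y, b, -, -, rfl⟩
  · exact mem_nhdsWithin_of_mem_nhds (Ioo_mem_nhds hxs.1 hxs.2)
  · exact Ico_mem_nhdsGE_of_mem hxs

lemma nhdsGE_le_nhds_hattori (x : ℝ) : 𝓝[≥] x ≤ @nhds ℝ (hattori C) x := by
  by_cases hx : x ∈ C
  · rw [nhds_hattori_of_mem hx]
    exact nhdsWithin_le_nhds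
  · rw [nhds_hattori_of_notMem hx]

lemma exists_Ioo_subset_of_isOpen_hattori {O : Set ℝ} (hO : IsOpen[hattori C] O)
    (hne : O.Nonempty) : ∃ a b, a < b ∧ Ioo a b ⊆ O := by
  obtain ⟨x, hx⟩ := hne
  obtain ⟨u, hxu, hu⟩ := mem_nhdsGE_iff_exists_Ico_subset.1 <|
    nhdsGE_le_nhds_hattori x (@IsOpen.mem_nhds _ (hattori C) _ _ hO hx)
  exact ⟨x, u, hxu, Ioo_subset_Ico_self.trans hu⟩

end Hattori

theorem stmt_18 (A B : Set ℝ) :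
    AdmissibleExtension (hattori B) (hattori A) ↔ B ⊆ A := by
  refine ⟨fun ⟨hfiner, _⟩ x hxB => ?_, fun hBA => ⟨fun s => hattori_mono hBA s, fun O hO hne => ?_⟩⟩
  · by_contra hxA
    have hIco : Ico x (x + 1) ∈ 𝓝 x := by
      rw [← nhds_hattori_of_mem hxB]
      exact @IsOpen.mem_nhds _ (hattori B) _ _
        (hfiner _ (isOpen_hattori_Ico hxA (lt_add_one x))) ⟨le_rfl, lt_add_one x⟩
    exact (Ico_mem_nhds_iff.1 hIco).1.false
  · obtain ⟨a, b, hab, hsub⟩ := exists_Ioo_subset_of_isOpen_hattori hO hne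
    exact ⟨Ioo a b, isOpen_hattori_Ioo a b, nonempty_Ioo.2 hab, hsub⟩
end

section
/- For every proper subset A ⊊ ℝ, the Hattori space H(A) = (ℝ, τ(A)) is a disconnected topological space. -/
open Topology Set

theorem hattori_le_standard (A : Set ℝ) : hattori A ≤ (inferInstance : TopologicalSpace ℝ) := by
  rw [Real.isTopologicalBasis_Ioo_rat.eq_generateFrom]
  refine le_generateFrom ?_
  simp only [mem_iUnion]
  rintro _ ⟨a, b, -, rfl⟩
  exact .basic _ (.inl ⟨a, b, rfl⟩)

theorem isOpen_hattori_of_isOpen (A : Set ℝ) {s : Set ℝ} (hs : IsOpen s) :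
    IsOpen[hattori A] s :=
  hattori_le_standard A s hs

theorem isOpen_hattori_Ici {A : Set ℝ} {x : ℝ} (hx : x ∉ A) : IsOpen[hattori A] (Ici x) := by
  have hIco : IsOpen[hattori A] (Ico x (x + 1)) :=
    .basic _ (.inr ⟨x, x + 1, hx, lt_add_one x, rfl⟩)
  have hIci : Ici x = Ico x (x + 1) ∪ Ioi x := by
    ext y
    simp only [mem_Ici, mem_union, mem_Ico, mem_Ioi]
    grind
  rw [hIci]
  exact @IsOpen.union ℝ _ _ (hattori A) hIco (isOpen_hattori_of_isOpen A isOpen_Ioi)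

/-- For every proper subset `A ⊊ ℝ`, the Hattori space `H(A) = (ℝ, τ(A))` is
disconnected. -/
theorem stmt_19 (A : Set ℝ) (hA : A ≠ Set.univ) :
    ¬ @ConnectedSpace ℝ (hattori A) := by
  obtain ⟨x, hx⟩ := (ne_univ_iff_exists_notMem A).1 hA
  intro _
  have hclosed : IsClosed[hattori A] (Ici x) :=
    @IsClosed.mk ℝ (hattori A) _ (compl_Ici (a := x) ▸ isOpen_hattori_of_isOpen A isOpen_Iio)
  rcases (@isClopen_iff ℝ (hattori A) _ _).1 ⟨hclosed, isOpen_hattori_Ici hx⟩ with h | h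
  · exact nonempty_Ici.ne_empty h
  · exact notMem_Ici.2 (sub_one_lt x) (h ▸ mem_univ _)
end
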